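/- arXiv:2207.03004 — 4 statements merged into one kernel-verified Lean document; each statement's English description precedes it below -/
import Mathlib

section
/- Let S be a standard semigroup in ℤ^d, let T_• = {T_q} be a p-system of ideals in S, and let H be a truncating halfspace for Cone(S). Then for every ε > 0 there exists q₀ such that for every power q = p^e of p with q ≥ q₀, the limit lim_{e'→∞} #((p^{e'}·T_q + S) ∩ p^{e'}qH)/(p^{e'd} q^d) exists and is at least Vol_{ℝ^d}(Δ(S, T_•) ∩ H) − ε. -/
/-!
The count in question is the number of lattice points of `n • R` with `n = p^e` and
`R = (T_q + Cone(S)) ∩ qH`, so up to the factor `q^d` its limit should be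
`vol R / q^d = vol(((1/q) T_q + Cone(S)) ∩ H)`. These sets increase with `q` (as `p T_q ⊆ T_{pq}`)
and exhaust `Δ(S, T_•) ∩ H`, which is bounded, so their volumes are eventually within `ε`.

Only finitely many `t ∈ T_q` matter in `R`, so `R` is a finite union of convex sets, hence Jordan
measurable, and the classical lattice count gives the upper bound. For the lower bound, near a
point of `t + int Cone(S)` the cone may be replaced by a finitely generated subcone of `Cone(S)`;
its lattice points are moved into `S` by a single shift, which is negligible after rescaling.
-/

open Filter MeasureTheory

noncomputable section

/-- The coercion of an integer vector to a real vector. -/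
def zr {d : ℕ} (u : Fin d → ℤ) : Fin d → ℝ := fun i => (u i : ℝ)

/-- Inner product of `a : ℝ^d` with an integer vector. -/
def aip {d : ℕ} (a : Fin d → ℝ) (u : Fin d → ℤ) : ℝ := ∑ i, a i * (u i : ℝ)

/-- Inner product of two real vectors. -/
def rip {d : ℕ} (a u : Fin d → ℝ) : ℝ := ∑ i, a i * u i

/-- `Cone(S)`: the closure of the set of all `ℝ_{≥0}`-linear combinations of elements of `S`. -/
def coneOf {d : ℕ} (S : Set (Fin d → ℤ)) : Set (Fin d → ℝ) :=
  closure {x | ∃ (n : ℕ) (c : Fin n → ℝ) (v : Fin n → Fin d → ℤ),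
    (∀ i, 0 ≤ c i) ∧ (∀ i, v i ∈ S) ∧ x = ∑ i, c i • zr (v i)}

/-- `S` is a standard semigroup in `ℤ^d`, with pointedness of `Cone(S)` witnessed by the
vector `a`: `S` is a subsemigroup containing `0`, `S - S = ℤ^d`, and `⟨a,u⟩ > 0` for every
nonzero `u ∈ Cone(S)`. -/
structure IsStdSemigroup {d : ℕ} (S : Set (Fin d → ℤ)) (a : Fin d → ℝ) : Prop where
  zero_mem : (0 : Fin d → ℤ) ∈ S
  add_mem : ∀ u ∈ S, ∀ v ∈ S, u + v ∈ S
  sub_eq : ∀ w : Fin d → ℤ, ∃ u ∈ S, ∃ v ∈ S, w = u - v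
  pointed : ∀ x ∈ coneOf S, x ≠ 0 → 0 < rip a x

/-- A `p`-system of ideals in `S`, indexed by `e` (so `q = p^e`): each `T_q` is a semigroup
ideal of `S` contained in `S`, and `p·T_q ⊆ T_{pq}`. -/
structure IsPSystem {d : ℕ} (p : ℕ) (S : Set (Fin d → ℤ)) (T : ℕ → Set (Fin d → ℤ)) : Prop where
  subset : ∀ e, T e ⊆ S
  ideal : ∀ e, ∀ t ∈ T e, ∀ s ∈ S, t + s ∈ T e
  frob : ∀ e, ∀ t ∈ T e, (p : ℤ) • t ∈ T (e + 1)

/-- The `p`-body `Δ(S, T_•) = ⋃_q ((1/q)T_q + Cone(S))`. -/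
def pBody {d : ℕ} (p : ℕ) (S : Set (Fin d → ℤ)) (T : ℕ → Set (Fin d → ℤ)) :
    Set (Fin d → ℝ) :=
  ⋃ e : ℕ, {x | ∃ t ∈ T e, ∃ c ∈ coneOf S, x = ((p : ℝ) ^ e)⁻¹ • zr t + c}

open Metric Set Bornology

section

variable {d : ℕ}

lemma zr_add (u v : Fin d → ℤ) : zr (u + v) = zr u + zr v := by
  ext; simp [zr]

lemma zr_zsmul (n : ℤ) (u : Fin d → ℤ) : zr (n • u) = (n : ℝ) • zr u := by
  ext; simp [zr]

lemma zr_nsmul (n : ℕ) (u : Fin d → ℤ) : zr (n • u) = (n : ℝ) • zr u := by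
  ext; simp [zr]

lemma zr_sum {ι : Type*} (s : Finset ι) (f : ι → Fin d → ℤ) :
    zr (∑ i ∈ s, f i) = ∑ i ∈ s, zr (f i) := by
  ext; simp [zr]

lemma zr_sub (u v : Fin d → ℤ) : zr (u - v) = zr u - zr v := by
  ext; simp [zr]

lemma zr_injective : Function.Injective (zr (d := d)) := fun u v h =>
  funext fun i => by simpa [zr] using congrFun h i

lemma norm_zr (u : Fin d → ℤ) : ‖zr u‖ = ‖u‖ := rfl

lemma finite_setOf_smul_zr_mem {s : Set (Fin d → ℝ)} (hs : IsBounded s) {c : ℝ} (hc : c ≠ 0) :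
    {u : Fin d → ℤ | c • zr u ∈ s}.Finite := by
  obtain ⟨C, hC⟩ := isBounded_iff_forall_norm_le.1 hs
  refine IsCompact.finite_of_discrete (isCompact_of_isClosed_isBounded (isClosed_discrete _)
    (isBounded_iff_forall_norm_le.2 ⟨C / ‖c‖, fun u hu => ?_⟩))
  have := hC _ hu
  rw [norm_smul, norm_zr] at this
  rw [le_div_iff₀ (norm_pos_iff.2 hc)]
  linarith

lemma aip_eq_rip (a : Fin d → ℝ) (u : Fin d → ℤ) : aip a u = rip a (zr u) := rfl

lemma rip_add (a x y : Fin d → ℝ) : rip a (x + y) = rip a x + rip a y := dotProduct_add _ _ _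

lemma rip_sub (a x y : Fin d → ℝ) : rip a (x - y) = rip a x - rip a y := dotProduct_sub _ _ _

lemma rip_smul (a : Fin d → ℝ) (c : ℝ) (x : Fin d → ℝ) : rip a (c • x) = c * rip a x :=
  dotProduct_smul _ _ _

lemma continuous_rip (a : Fin d → ℝ) : Continuous (rip a) := by
  unfold rip; fun_prop

section Cone

variable {S : Set (Fin d → ℤ)}

abbrev coneHull (S : Set (Fin d → ℤ)) : PointedCone ℝ (Fin d → ℝ) := PointedCone.hull ℝ (zr '' S)

lemma coneOf_eq_closure_coneHull (S : Set (Fin d → ℤ)) :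
    coneOf S = closure (coneHull S) := by
  unfold coneOf
  congr 1
  ext x
  constructor
  · rintro ⟨n, c, v, hc, hv, rfl⟩
    refine Submodule.sum_mem _ fun i _ => ?_
    exact Submodule.smul_mem _ (⟨c i, hc i⟩ : {c : ℝ // 0 ≤ c})
      (PointedCone.subset_hull ⟨v i, hv i, rfl⟩)
  · intro hx
    obtain ⟨n, f, g, rfl⟩ := Submodule.mem_span_set'.1 hx
    choose v hv hvg using fun i => (g i).2
    exact ⟨n, fun i => f i, v, fun i => (f i).2, hv, by simp [hvg]⟩

lemma coneOf_eq_topologicalClosure (S : Set (Fin d → ℤ)) :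
    coneOf S = ((coneHull S).topologicalClosure : Set (Fin d → ℝ)) := by
  rw [Submodule.topologicalClosure_coe, coneOf_eq_closure_coneHull]

lemma isClosed_coneOf (S : Set (Fin d → ℤ)) : IsClosed (coneOf S) := by
  rw [coneOf_eq_closure_coneHull]; exact isClosed_closure

lemma convex_coneOf (S : Set (Fin d → ℤ)) : Convex ℝ (coneOf S) := by
  rw [coneOf_eq_closure_coneHull]; exact (PointedCone.convex _).closure

lemma add_mem_coneOf {x y : Fin d → ℝ} (hx : x ∈ coneOf S) (hy : y ∈ coneOf S) :
    x + y ∈ coneOf S := by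
  rw [coneOf_eq_topologicalClosure] at *; exact add_mem hx hy

lemma smul_mem_coneOf {c : ℝ} (hc : 0 ≤ c) {x : Fin d → ℝ} (hx : x ∈ coneOf S) :
    c • x ∈ coneOf S := by
  rw [coneOf_eq_topologicalClosure] at *
  exact PointedCone.smul_mem _ hc hx

lemma coneHull_subset_coneOf : (coneHull S : Set (Fin d → ℝ)) ⊆ coneOf S := by
  rw [coneOf_eq_closure_coneHull]; exact subset_closure

lemma zr_mem_coneOf {s : Fin d → ℤ} (hs : s ∈ S) : zr s ∈ coneOf S :=
  coneHull_subset_coneOf (PointedCone.subset_hull ⟨s, hs, rfl⟩)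

lemma rip_nonneg_of_mem_coneOf {a : Fin d → ℝ} (hS : IsStdSemigroup S a) {x : Fin d → ℝ}
    (hx : x ∈ coneOf S) : 0 ≤ rip a x := by
  rcases eq_or_ne x 0 with rfl | h
  · simp [rip]
  · exact (hS.pointed x hx h).le

lemma exists_pos_mul_norm_le_rip {a : Fin d → ℝ} {K : Set (Fin d → ℝ)} (hK : IsClosed K)
    (hsmul : ∀ x ∈ K, ∀ t : ℝ, 0 ≤ t → t • x ∈ K) (hpos : ∀ x ∈ K, x ≠ 0 → 0 < rip a x) :
    ∃ c > 0, ∀ x ∈ K, c * ‖x‖ ≤ rip a x := by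
  obtain ⟨c, hc, hcK⟩ := ((isCompact_sphere (0 : Fin d → ℝ) 1).inter_left hK).exists_forall_le'
    (continuous_rip a).continuousOn (a := 0) fun x hx =>
      hpos x hx.1 (ne_zero_of_mem_unit_sphere (⟨x, hx.2⟩ : sphere (0 : Fin d → ℝ) 1))
  refine ⟨c, hc, fun x hx => ?_⟩
  rcases eq_or_ne x 0 with rfl | hx0
  · simp [rip]
  have hnx : 0 < ‖x‖ := norm_pos_iff.2 hx0
  have hunit : ‖x‖⁻¹ • x ∈ K ∩ sphere 0 1 :=
    ⟨hsmul x hx _ (inv_nonneg.2 hnx.le), by simp [norm_smul, hnx.ne']⟩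
  have := hcK _ hunit
  rw [rip_smul, inv_mul_eq_div, le_div_iff₀ hnx] at this
  linarith

lemma isBounded_coneOf_inter {a : Fin d → ℝ} (hS : IsStdSemigroup S a) (β : ℝ) :
    IsBounded {x | x ∈ coneOf S ∧ rip a x < β} := by
  obtain ⟨c, hc, hcx⟩ := exists_pos_mul_norm_le_rip (isClosed_coneOf S)
    (fun x hx t ht => smul_mem_coneOf ht hx) hS.pointed
  refine isBounded_iff_forall_norm_le.2 ⟨β / c, fun x hx => ?_⟩
  rw [le_div_iff₀ hc]
  linarith [hcx x hx.1, hx.2]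

end Cone

section Semigroup

variable {S : Set (Fin d → ℤ)} {a : Fin d → ℝ}

def IsStdSemigroup.toAddSubmonoid (hS : IsStdSemigroup S a) : AddSubmonoid (Fin d → ℤ) where
  carrier := S
  zero_mem' := hS.zero_mem
  add_mem' hu hv := hS.add_mem _ hu _ hv

lemma IsStdSemigroup.exists_add_mem (hS : IsStdSemigroup S a) (D : Finset (Fin d → ℤ)) :
    ∃ x₀ ∈ S, ∀ r ∈ D, r + x₀ ∈ S := by
  classical
  induction D using Finset.induction with
  | empty => exact ⟨0, hS.zero_mem, by simp⟩
  | insert r D _ ih =>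
    obtain ⟨x₀, hx₀, hD⟩ := ih
    obtain ⟨u, hu, v, hv, huv⟩ := hS.sub_eq (r + x₀)
    refine ⟨x₀ + v, hS.add_mem _ hx₀ _ hv,
      (Finset.forall_mem_insert _ _ _).2 ⟨?_, fun r' hr' => ?_⟩⟩
    · rwa [← add_assoc, huv, sub_add_cancel]
    · rw [← add_assoc]; exact hS.add_mem _ (hD r' hr') _ hv

lemma IsStdSemigroup.exists_add_mem_of_mem_coneHull (hS : IsStdSemigroup S a)
    (G : Finset (Fin d → ℤ)) (hG : ↑G ⊆ S) :
    ∃ x₀, ∀ w, zr w ∈ coneHull (G : Set (Fin d → ℤ)) → w + x₀ ∈ S := by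
  classical
  set M := ∑ g ∈ G, ‖g‖
  obtain ⟨x₀, -, hx₀⟩ := hS.exists_add_mem
    ((isCompact_closedBall (0 : Fin d → ℤ) M).finite_of_discrete.toFinset)
  refine ⟨x₀, fun w hw => ?_⟩
  obtain ⟨t, htG, c, hc⟩ := Submodule.mem_span_image_iff_exists_fun _ |>.1 hw
  set w' := ∑ i : t, ⌊(c i : ℝ)⌋₊ • (i : Fin d → ℤ)
  have hw' : w' ∈ S := hS.toAddSubmonoid.sum_mem fun i _ =>
    hS.toAddSubmonoid.nsmul_mem (hG (htG i.2)) _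
  have hfract : zr (w - w') = ∑ i : t, ((c i : ℝ) - ⌊(c i : ℝ)⌋₊) • zr i := by
    rw [zr_sub, zr_sum, ← hc, ← Finset.sum_sub_distrib]
    refine Finset.sum_congr rfl fun i _ => ?_
    rw [zr_nsmul, ← Nonneg.coe_smul, sub_smul]
  have hsmall : ‖w - w'‖ ≤ M := by
    rw [← norm_zr, hfract]
    refine (norm_sum_le _ _).trans ((Finset.sum_le_sum
      (g := fun i : t => ‖(i : Fin d → ℤ)‖) fun i _ => ?_).trans ?_)
    · rw [norm_smul, Real.norm_of_nonneg (sub_nonneg.2 (Nat.floor_le (c i).2)), norm_zr]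
      exact mul_le_of_le_one_left (norm_nonneg _) (by linarith [Nat.lt_floor_add_one (c i : ℝ)])
    · rw [Finset.sum_coe_sort t (fun g => ‖g‖)]
      exact Finset.sum_le_sum_of_subset_of_nonneg (Finset.coe_subset.1 htG)
        fun _ _ _ => norm_nonneg _
  have hmem : w - w' ∈ (isCompact_closedBall (0 : Fin d → ℤ) M).finite_of_discrete.toFinset := by
    simpa using hsmall
  have := hS.add_mem _ hw' _ (hx₀ _ hmem)
  rwa [← add_assoc, add_sub_cancel] at this

end Semigroup

section Interior

variable {S : Set (Fin d → ℤ)}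

lemma interior_coneHull_nonempty_of_mem_interior_coneOf {x : Fin d → ℝ}
    (hx : x ∈ interior (coneOf S)) :
    (interior (coneHull S : Set (Fin d → ℝ))).Nonempty := by
  set P := (coneHull S : Set (Fin d → ℝ))
  have hspan : affineSpan ℝ (closure P) = ⊤ := by
    rw [← (PointedCone.convex _).closure.interior_nonempty_iff_affineSpan_eq_top]
    exact ⟨x, by rwa [← coneOf_eq_closure_coneHull]⟩
  rw [(PointedCone.convex _).interior_nonempty_iff_affineSpan_eq_top, eq_top_iff, ← hspan]
  exact affineSpan_le.2 (closure_minimal (subset_affineSpan ℝ P)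
    (AffineSubspace.closed_of_finiteDimensional _))

lemma exists_finset_mem_interior_coneHull {x : Fin d → ℝ} (hx : x ∈ interior (coneOf S)) :
    ∃ G : Finset (Fin d → ℤ), ↑G ⊆ S ∧
      x ∈ interior (coneHull (G : Set (Fin d → ℤ)) : Set (Fin d → ℝ)) := by
  classical
  have hx' : x ∈ interior (coneHull S : Set (Fin d → ℝ)) := by
    rwa [← (PointedCone.convex (coneHull S)).interior_closure_eq_interior_of_nonempty_interior
      (interior_coneHull_nonempty_of_mem_interior_coneOf hx), ← coneOf_eq_closure_coneHull]
  obtain ⟨b, hxb, hbP⟩ :=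
    exists_mem_interior_convexHull_affineBasis (mem_interior_iff_mem_nhds.1 hx')
  have hvertex : ∀ i, ∃ G : Finset (Fin d → ℤ), ↑G ⊆ S ∧
      b i ∈ coneHull (G : Set (Fin d → ℤ)) := fun i => by
    obtain ⟨T, hTS, hbT⟩ := Submodule.mem_span_finite_of_mem_span
      (hbP (subset_convexHull ℝ _ ⟨i, rfl⟩))
    obtain ⟨G, hGS, rfl⟩ := Finset.subset_set_image_iff.1 hTS
    exact ⟨G, hGS, by simpa using hbT⟩
  choose G hGS hbG using hvertex
  refine ⟨Finset.univ.biUnion G, by simpa using fun i => hGS i, interior_mono ?_ hxb⟩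
  refine convexHull_min (Set.range_subset_iff.2 fun i => ?_) (PointedCone.convex _)
  have hGi : G i ⊆ Finset.univ.biUnion G := Finset.subset_biUnion_of_mem G (Finset.mem_univ i)
  exact Submodule.span_mono (Set.image_mono (Finset.coe_subset.2 hGi)) (hbG i)

end Interior

section Counting

open scoped Pointwise

lemma ncard_setOf_smul_zr_mem (n : ℕ) [NeZero n] (s : Set (Fin d → ℝ)) :
    {u : Fin d → ℤ | (n : ℝ)⁻¹ • zr u ∈ s}.ncard =
      Nat.card ↑(s ∩ (n : ℝ)⁻¹ • (Submodule.span ℤ (range (Pi.basisFun ℝ (Fin d))) :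
        Set (Fin d → ℝ))) := by
  have hn : (n : ℝ) ≠ 0 := NeZero.ne _
  have hinj : Function.Injective fun u : Fin d → ℤ => (n : ℝ)⁻¹ • zr u :=
    fun u v h => zr_injective (smul_right_injective _ (inv_ne_zero hn) h)
  rw [← Set.ncard_image_of_injective _ hinj, ← Nat.card_coe_set_eq]
  congr 3
  ext v
  rw [mem_inter_iff, ← Submodule.coe_pointwise_smul, SetLike.mem_coe,
    BoxIntegral.unitPartition.mem_smul_span_iff]
  constructor
  · rintro ⟨u, hu, rfl⟩
    exact ⟨hu, fun i => ⟨u i, by simp [zr, hn]⟩⟩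
  · rintro ⟨hv, hint⟩
    choose u hu using hint
    have hvu : (n : ℝ)⁻¹ • zr u = v := by
      ext i
      have := hu i
      simp only [algebraMap_int_eq, eq_intCast] at this
      simp [zr, this, hn]
    exact ⟨u, by rwa [mem_ofPred_eq, hvu], hvu⟩

lemma tendsto_ncard_setOf_smul_zr_mem {s : Set (Fin d → ℝ)} (hb : IsBounded s)
    (hm : MeasurableSet s) (hf : volume (frontier s) = 0) :
    Tendsto (fun n : ℕ => ({u : Fin d → ℤ | (n : ℝ)⁻¹ • zr u ∈ s}.ncard : ℝ) / n ^ d) atTop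
      (nhds (volume s).toReal) := by
  have := tendsto_card_div_pow_atTop_volume s hb hm hf
  rw [Fintype.card_fin, measureReal_def] at this
  refine this.congr' ((eventually_ge_atTop 1).mono fun n hn => ?_)
  dsimp only
  have : NeZero n := ⟨by omega⟩
  rw [ncard_setOf_smul_zr_mem]

lemma measure_frontier_biUnion_convex {E ι : Type*} [NormedAddCommGroup E] [NormedSpace ℝ E]
    [MeasurableSpace E] [BorelSpace E] [FiniteDimensional ℝ E] (μ : Measure E)
    [μ.IsAddHaarMeasure] (F : Finset ι) {A : ι → Set E} (hA : ∀ i ∈ F, Convex ℝ (A i)) :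
    μ (frontier (⋃ i ∈ F, A i)) = 0 := by
  refine measure_mono_null (t := ⋃ i ∈ F, frontier (A i)) ?_
    ((measure_biUnion_null_iff F.countable_toSet).2 fun i hi => (hA i hi).addHaar_frontier μ)
  rintro x ⟨hcl, hint⟩
  rw [Finset.closure_biUnion] at hcl
  obtain ⟨i, hi, hxi⟩ := mem_iUnion₂.1 hcl
  exact mem_iUnion₂.2 ⟨i, hi, hxi, fun h => hint (interior_mono (subset_biUnion_of_mem hi) h)⟩

variable {X : ℕ → Set (Fin d → ℤ)}

lemma eventually_lt_ncard_div_pow {U : Set (Fin d → ℝ)} (hU : IsOpen U)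
    (hUX : ∀ x ∈ U, ∃ δ > 0, ∀ᶠ n : ℕ in atTop, ∀ u, (n : ℝ)⁻¹ • zr u ∈ ball x δ → u ∈ X n)
    (hXfin : ∀ᶠ n in atTop, (X n).Finite) {c : ℝ} (hc0 : 0 ≤ c)
    (hc : ENNReal.ofReal c < volume U) :
    ∀ᶠ n : ℕ in atTop, c < ((X n).ncard : ℝ) / n ^ d := by
  obtain ⟨K, hKU, hK, hcK⟩ := hU.exists_lt_isCompact hc
  choose! δ hδ hδX using hUX
  obtain ⟨F, hFK, hKF⟩ := hK.elim_nhds_subcover (fun x => ball x (δ x))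
    fun x hx => ball_mem_nhds x (hδ x (hKU hx))
  set B := ⋃ x ∈ F, ball x (δ x)
  have hBb : IsBounded B := isBounded_biUnion_finset F |>.2 fun _ _ => isBounded_ball
  have hcB : c < (volume B).toReal :=
    (ENNReal.ofReal_lt_iff_lt_toReal hc0 hBb.measure_lt_top.ne).1
      (hcK.trans_le (measure_mono hKF))
  have hBX : ∀ᶠ n : ℕ in atTop, {u : Fin d → ℤ | (n : ℝ)⁻¹ • zr u ∈ B} ⊆ X n := by
    filter_upwards [(Finset.eventually_all F).2 fun x hx => hδX x (hKU (hFK x hx))] with n hn u hu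
    obtain ⟨x, hx, hux⟩ := mem_iUnion₂.1 hu
    exact hn x hx u hux
  have hlim := tendsto_ncard_setOf_smul_zr_mem hBb
    (isOpen_biUnion fun _ _ => isOpen_ball).measurableSet
    (measure_frontier_biUnion_convex volume F fun _ _ => convex_ball _ _)
  filter_upwards [hlim.eventually_const_lt hcB, hBX, hXfin] with n hn hBXn hXn
  exact hn.trans_le (div_le_div_of_nonneg_right (Nat.cast_le.2 (Set.ncard_le_ncard hBXn hXn))
    (by positivity))

lemma tendsto_ncard_div_pow_of_approx {R U : Set (Fin d → ℝ)} (hRb : IsBounded R)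
    (hRm : MeasurableSet R) (hRf : volume (frontier R) = 0) (hU : IsOpen U)
    (hRU : volume R ≤ volume U) (hXR : ∀ n : ℕ, 0 < n → ∀ u ∈ X n, (n : ℝ)⁻¹ • zr u ∈ R)
    (hUX : ∀ x ∈ U, ∃ δ > 0, ∀ᶠ n : ℕ in atTop, ∀ u, (n : ℝ)⁻¹ • zr u ∈ ball x δ → u ∈ X n) :
    Tendsto (fun n : ℕ => ((X n).ncard : ℝ) / n ^ d) atTop (nhds (volume R).toReal) := by
  have hfin : ∀ n : ℕ, 0 < n → {u : Fin d → ℤ | (n : ℝ)⁻¹ • zr u ∈ R}.Finite := fun n hn =>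
    finite_setOf_smul_zr_mem hRb (by positivity)
  refine tendsto_order.2 ⟨fun c hc => ?_, fun c hc => ?_⟩
  · rcases lt_or_ge c 0 with hc0 | hc0
    · exact Eventually.of_forall fun n => hc0.trans_le (by positivity)
    refine eventually_lt_ncard_div_pow hU hUX ?_ hc0
      (((ENNReal.ofReal_lt_iff_lt_toReal hc0 hRb.measure_lt_top.ne).2 hc).trans_le hRU)
    filter_upwards [eventually_gt_atTop 0] with n hn
    exact (hfin n hn).subset (hXR n hn)
  · filter_upwards [(tendsto_ncard_setOf_smul_zr_mem hRb hRm hRf).eventually_lt_const hc,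
      eventually_gt_atTop 0] with n hn hn0
    exact (div_le_div_of_nonneg_right (Nat.cast_le.2 (Set.ncard_le_ncard (hXR n hn0)
      (hfin n hn0))) (by positivity)).trans_lt hn

end Counting

section IdealBody

variable {S T' : Set (Fin d → ℤ)} {a : Fin d → ℝ} {β : ℝ}

def idealBody (a : Fin d → ℝ) (S T' : Set (Fin d → ℤ)) (β : ℝ) : Set (Fin d → ℝ) :=
  {x | (∃ t ∈ T', x - zr t ∈ coneOf S) ∧ rip a x < β}

lemma isOpen_setOf_rip_lt (a : Fin d → ℝ) (β : ℝ) : IsOpen {x : Fin d → ℝ | rip a x < β} :=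
  isOpen_lt (continuous_rip a) continuous_const

lemma aip_le_rip_of_sub_mem_coneOf (hS : IsStdSemigroup S a) {x : Fin d → ℝ} {t : Fin d → ℤ}
    (hxt : x - zr t ∈ coneOf S) : aip a t ≤ rip a x := by
  have := rip_nonneg_of_mem_coneOf hS hxt
  rw [rip_sub] at this
  rw [aip_eq_rip]
  linarith

lemma idealBody_subset (hT'S : T' ⊆ S) :
    idealBody a S T' β ⊆ {x | x ∈ coneOf S ∧ rip a x < β} := by
  rintro x ⟨⟨t, ht, hxt⟩, hx⟩
  refine ⟨?_, hx⟩
  simpa using add_mem_coneOf (zr_mem_coneOf (hT'S ht)) hxt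

lemma finite_setOf_mem_aip_lt (hS : IsStdSemigroup S a) (hT'S : T' ⊆ S) (β : ℝ) :
    {t | t ∈ T' ∧ aip a t < β}.Finite :=
  (finite_setOf_smul_zr_mem (isBounded_coneOf_inter hS β) one_ne_zero).subset
    fun t ht => by simpa [aip_eq_rip] using ⟨zr_mem_coneOf (hT'S ht.1), ht.2⟩

lemma idealBody_eq_biUnion (hS : IsStdSemigroup S a) (hT'S : T' ⊆ S) :
    idealBody a S T' β = ⋃ t ∈ (finite_setOf_mem_aip_lt hS hT'S β).toFinset,
      {x | x - zr t ∈ coneOf S} ∩ {x | rip a x < β} := by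
  ext x
  simp only [idealBody, mem_ofPred_eq, mem_iUnion, Finite.mem_toFinset, mem_inter_iff]
  constructor
  · rintro ⟨⟨t, ht, hxt⟩, hx⟩
    exact ⟨t, ⟨ht, (aip_le_rip_of_sub_mem_coneOf hS hxt).trans_lt hx⟩, hxt, hx⟩
  · rintro ⟨t, ⟨ht, -⟩, hxt, hx⟩
    exact ⟨⟨t, ht, hxt⟩, hx⟩

lemma isBounded_idealBody (hS : IsStdSemigroup S a) (hT'S : T' ⊆ S) :
    IsBounded (idealBody a S T' β) :=
  (isBounded_coneOf_inter hS β).subset (idealBody_subset hT'S)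

lemma measurableSet_idealBody : MeasurableSet (idealBody a S T' β) := by
  have : idealBody a S T' β = (⋃ t ∈ T', (· - zr t) ⁻¹' coneOf S) ∩ {x | rip a x < β} := by
    ext; simp [idealBody]
  rw [this]
  exact (MeasurableSet.biUnion T'.to_countable fun t _ => ((isClosed_coneOf S).preimage
    (continuous_sub_right _)).measurableSet).inter (isOpen_setOf_rip_lt a β).measurableSet

lemma volume_frontier_idealBody (hS : IsStdSemigroup S a) (hT'S : T' ⊆ S) :
    volume (frontier (idealBody a S T' β)) = 0 := by
  rw [idealBody_eq_biUnion hS hT'S]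
  refine measure_frontier_biUnion_convex volume _ fun t _ => ?_
  refine Convex.inter ?_ (convex_halfSpace_lt ⟨rip_add a, fun c x => rip_smul a c x⟩ β)
  have hpre : {x | x - zr t ∈ coneOf S} = (fun x => -zr t + x) ⁻¹' coneOf S := by
    ext x; simp [sub_eq_neg_add]
  rw [hpre]
  exact (convex_coneOf S).translate_preimage_right (-zr t)

def openIdealBody (a : Fin d → ℝ) (S T' : Set (Fin d → ℤ)) (β : ℝ) : Set (Fin d → ℝ) :=
  {x | (∃ t ∈ T', x - zr t ∈ interior (coneOf S)) ∧ rip a x < β}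

lemma isOpen_openIdealBody : IsOpen (openIdealBody a S T' β) := by
  have : openIdealBody a S T' β =
      ⋃ t ∈ T', (fun x => x - zr t) ⁻¹' interior (coneOf S) ∩ {x | rip a x < β} := by
    ext x
    simp only [openIdealBody, mem_ofPred_eq, mem_iUnion, mem_inter_iff, mem_preimage, exists_prop]
    constructor
    · rintro ⟨⟨t, ht, hxt⟩, hx⟩; exact ⟨t, ht, hxt, hx⟩
    · rintro ⟨t, ht, hxt, hx⟩; exact ⟨⟨t, ht, hxt⟩, hx⟩
  rw [this]
  exact isOpen_biUnion fun t _ =>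
    (isOpen_interior.preimage (continuous_sub_right _)).inter (isOpen_setOf_rip_lt a β)

lemma volume_idealBody_le (hS : IsStdSemigroup S a) (hT'S : T' ⊆ S) :
    volume (idealBody a S T' β) ≤ volume (openIdealBody a S T' β) := by
  set F := (finite_setOf_mem_aip_lt hS hT'S β).toFinset
  have hsub : idealBody a S T' β ⊆
      openIdealBody a S T' β ∪ ⋃ t ∈ F, {x | x - zr t ∈ frontier (coneOf S)} := by
    intro x hx
    rw [idealBody_eq_biUnion hS hT'S] at hx
    obtain ⟨t, ht, hxt, hx⟩ := mem_iUnion₂.1 hx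
    by_cases hint : x - zr t ∈ interior (coneOf S)
    · exact Or.inl ⟨⟨t, ((Finite.mem_toFinset _).1 ht).1, hint⟩, hx⟩
    · refine Or.inr (mem_iUnion₂.2 ⟨t, ht, ?_⟩)
      rw [mem_ofPred_eq, (isClosed_coneOf S).frontier_eq]
      exact ⟨hxt, hint⟩
  have hnull : volume (⋃ t ∈ F, {x | x - zr t ∈ frontier (coneOf S)}) = 0 := by
    refine (measure_biUnion_null_iff F.countable_toSet).2 fun t _ => ?_
    have hpre : {x | x - zr t ∈ frontier (coneOf S)} = (· + -zr t) ⁻¹' frontier (coneOf S) := by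
      ext x; simp [sub_eq_add_neg]
    rw [hpre, measure_preimage_add_right, (convex_coneOf S).addHaar_frontier volume]
  calc volume (idealBody a S T' β)
      ≤ volume (openIdealBody a S T' β) + volume (⋃ t ∈ F, {x | x - zr t ∈ frontier (coneOf S)}) :=
        (measure_mono hsub).trans (measure_union_le _ _)
    _ = volume (openIdealBody a S T' β) := by rw [hnull, add_zero]

lemma exists_ball_eventually_mem (hS : IsStdSemigroup S a) {x : Fin d → ℝ}
    (hx : x ∈ openIdealBody a S T' β) :
    ∃ δ > 0, ∀ᶠ n : ℕ in atTop, ∀ u, (n : ℝ)⁻¹ • zr u ∈ ball x δ →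
      (∃ t ∈ T', ∃ s ∈ S, u = (n : ℤ) • t + s) ∧ aip a u < n * β := by
  obtain ⟨⟨t, ht, hxt⟩, hxβ⟩ := hx
  -- near `n x`, lattice points differ from `n t` by points of a finitely generated subcone,
  -- which the single shift `x₀` moves into `S`
  obtain ⟨G, hGS, hxG⟩ := exists_finset_mem_interior_coneHull hxt
  obtain ⟨x₀, hx₀⟩ := hS.exists_add_mem_of_mem_coneHull G hGS
  obtain ⟨ε, hε, hεG⟩ := Metric.isOpen_iff.1 isOpen_interior _ hxG
  obtain ⟨ε', hε', hε'β⟩ := Metric.isOpen_iff.1 (isOpen_setOf_rip_lt a β) x hxβ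
  refine ⟨min (ε / 2) ε', by positivity, ?_⟩
  filter_upwards [eventually_gt_atTop 0,
    tendsto_natCast_atTop_atTop.eventually_gt_atTop (2 * ‖x₀‖ / ε)] with n hn hnx₀ u hu
  have hn' : (0 : ℝ) < n := Nat.cast_pos.2 hn
  have hshift : (n : ℝ)⁻¹ * ‖x₀‖ < ε / 2 := by
    rw [inv_mul_lt_iff₀ hn']
    rw [div_lt_iff₀ hε] at hnx₀
    linarith
  set w := u - (n : ℤ) • t - x₀
  have hw : (n : ℝ)⁻¹ • zr w ∈ ball (x - zr t) ε := by
    have : (n : ℝ)⁻¹ • zr w - (x - zr t) = ((n : ℝ)⁻¹ • zr u - x) - (n : ℝ)⁻¹ • zr x₀ := by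
      simp only [w, zr_sub, zr_zsmul, smul_sub, smul_smul, Int.cast_natCast,
        inv_mul_cancel₀ hn'.ne', one_smul]
      abel
    rw [mem_ball, dist_eq_norm, this]
    calc ‖((n : ℝ)⁻¹ • zr u - x) - (n : ℝ)⁻¹ • zr x₀‖
        ≤ ‖(n : ℝ)⁻¹ • zr u - x‖ + ‖(n : ℝ)⁻¹ • zr x₀‖ := norm_sub_le _ _
      _ < ε / 2 + ε / 2 := by
          refine add_lt_add_of_lt_of_le ?_ ?_
          · rw [← dist_eq_norm]; exact (mem_ball.1 hu).trans_le (min_le_left _ _)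
          · rw [norm_smul, norm_inv, Real.norm_natCast, norm_zr]; exact hshift.le
      _ = ε := add_halves ε
  have hwG : zr w ∈ coneHull (G : Set (Fin d → ℤ)) :=
    (PointedCone.smul_mem_iff _ (inv_pos.2 hn')).1 (interior_subset (hεG hw))
  have hS' : u - (n : ℤ) • t ∈ S := by simpa [w] using hx₀ w hwG
  refine ⟨⟨t, ht, _, hS', by abel⟩, ?_⟩
  have := hε'β ((mem_ball.1 hu).trans_le (min_le_right _ _))
  rw [mem_ofPred_eq, rip_smul, inv_mul_lt_iff₀ hn'] at this
  rwa [aip_eq_rip]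

lemma inv_smul_zr_mem_idealBody {n : ℕ} (hn : 0 < n) {u : Fin d → ℤ}
    (hu : (∃ t ∈ T', ∃ s ∈ S, u = (n : ℤ) • t + s) ∧ aip a u < n * β) :
    (n : ℝ)⁻¹ • zr u ∈ idealBody a S T' β := by
  obtain ⟨⟨t, ht, s, hs, rfl⟩, hlt⟩ := hu
  have hn' : (0 : ℝ) < n := Nat.cast_pos.2 hn
  refine ⟨⟨t, ht, ?_⟩, ?_⟩
  · rw [zr_add, zr_zsmul, smul_add, smul_smul, Int.cast_natCast, inv_mul_cancel₀ hn'.ne',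
      one_smul, add_sub_cancel_left]
    exact smul_mem_coneOf (inv_nonneg.2 hn'.le) (zr_mem_coneOf hs)
  · rwa [rip_smul, inv_mul_lt_iff₀ hn', ← aip_eq_rip]

lemma tendsto_ncard_div_pow_idealBody (hS : IsStdSemigroup S a) (hT'S : T' ⊆ S) (β : ℝ) :
    Tendsto (fun n : ℕ => ({u : Fin d → ℤ | (∃ t ∈ T', ∃ s ∈ S, u = (n : ℤ) • t + s) ∧
        aip a u < n * β}.ncard : ℝ) / n ^ d) atTop (nhds (volume (idealBody a S T' β)).toReal) :=
  tendsto_ncard_div_pow_of_approx (isBounded_idealBody hS hT'S) measurableSet_idealBody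
    (volume_frontier_idealBody hS hT'S) isOpen_openIdealBody (volume_idealBody_le hS hT'S)
    (fun _ hn _ hu => inv_smul_zr_mem_idealBody hn hu) fun _ hx => exists_ball_eventually_mem hS hx

end IdealBody

section PBody

open scoped Pointwise

variable {p : ℕ} {S : Set (Fin d → ℤ)} {T : ℕ → Set (Fin d → ℤ)} {a : Fin d → ℝ} {α : ℝ}

def pBodyTerm (p : ℕ) (S : Set (Fin d → ℤ)) (T : ℕ → Set (Fin d → ℤ)) (e : ℕ) :
    Set (Fin d → ℝ) :=
  {x | ∃ t ∈ T e, ∃ c ∈ coneOf S, x = ((p : ℝ) ^ e)⁻¹ • zr t + c}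

lemma pBody_eq_iUnion : pBody p S T = ⋃ e, pBodyTerm p S T e := rfl

lemma monotone_pBodyTerm (hp : p ≠ 0) (hT : IsPSystem p S T) : Monotone (pBodyTerm p S T) := by
  refine monotone_nat_of_le_succ fun e => ?_
  rintro x ⟨t, ht, c, hc, rfl⟩
  refine ⟨(p : ℤ) • t, hT.frob e t ht, c, hc, ?_⟩
  have hp' : (p : ℝ) ≠ 0 := Nat.cast_ne_zero.2 hp
  rw [zr_zsmul, smul_smul, pow_succ, mul_inv, mul_assoc, Int.cast_natCast, inv_mul_cancel₀ hp',
    mul_one]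

lemma inv_smul_idealBody {T' : Set (Fin d → ℤ)} {r : ℝ} (hr : 0 < r) :
    r⁻¹ • idealBody a S T' (r * α) =
      {x | ∃ t ∈ T', ∃ c ∈ coneOf S, x = r⁻¹ • zr t + c} ∩ {x | rip a x < α} := by
  ext x
  rw [mem_smul_set_iff_inv_smul_mem₀ (inv_ne_zero hr.ne'), inv_inv]
  constructor
  · rintro ⟨⟨t, ht, hxt⟩, hx⟩
    refine ⟨⟨t, ht, r⁻¹ • (r • x - zr t), smul_mem_coneOf (inv_nonneg.2 hr.le) hxt, ?_⟩, ?_⟩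
    · rw [smul_sub, inv_smul_smul₀ hr.ne', add_sub_cancel]
    · rwa [rip_smul, mul_lt_mul_iff_right₀ hr] at hx
  · rintro ⟨⟨t, ht, c, hc, rfl⟩, hx⟩
    refine ⟨⟨t, ht, ?_⟩, ?_⟩
    · rw [smul_add, smul_inv_smul₀ hr.ne', add_sub_cancel_left]
      exact smul_mem_coneOf hr.le hc
    · rwa [rip_smul, mul_lt_mul_iff_right₀ hr]

lemma toReal_volume_inv_smul {r : ℝ} (hr : 0 < r) (s : Set (Fin d → ℝ)) :
    (volume (r⁻¹ • s)).toReal = (volume s).toReal / r ^ d := by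
  rw [Measure.addHaar_smul, Module.finrank_fin_fun, ENNReal.toReal_mul,
    ENNReal.toReal_ofReal (abs_nonneg _), abs_of_pos (by positivity), inv_pow, inv_mul_eq_div]

lemma pBody_inter_subset (hT : ∀ e, T e ⊆ S) :
    pBody p S T ∩ {x | rip a x < α} ⊆ {x | x ∈ coneOf S ∧ rip a x < α} := by
  rintro _ ⟨hx, hxα⟩
  obtain ⟨e, t, ht, c, hc, rfl⟩ := mem_iUnion.1 hx
  exact ⟨add_mem_coneOf (smul_mem_coneOf (by positivity) (zr_mem_coneOf (hT e ht))) hc, hxα⟩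

end PBody

end

theorem stmt_1_general {d : ℕ} (p : ℕ) (hp : p.Prime) (S : Set (Fin d → ℤ)) (a : Fin d → ℝ)
    (hS : IsStdSemigroup S a) (T : ℕ → Set (Fin d → ℤ)) (hT : IsPSystem p S T)
    (α : ℝ) :
    ∀ ε : ℝ, 0 < ε → ∃ e₀ : ℕ, ∀ e' : ℕ, e₀ ≤ e' →
      ∃ L : ℝ,
        Tendsto
          (fun e : ℕ =>
            (Set.ncard {u : Fin d → ℤ |
                (∃ t ∈ T e', ∃ s ∈ S, u = ((p : ℤ) ^ e) • t + s) ∧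
                  aip a u < (p : ℝ) ^ e * ((p : ℝ) ^ e' * α)} : ℝ) /
              ((p : ℝ) ^ (e * d) * (p : ℝ) ^ (e' * d)))
          atTop (nhds L) ∧
        (volume (pBody p S T ∩ {x : Fin d → ℝ | rip a x < α})).toReal - ε ≤ L := by
  intro ε hε
  set H := {x : Fin d → ℝ | rip a x < α}
  have hfin : volume (pBody p S T ∩ H) ≠ ⊤ :=
    ((isBounded_coneOf_inter hS α).subset (pBody_inter_subset hT.subset)).measure_lt_top.ne
  have hlim : Tendsto (fun e => (volume (pBodyTerm p S T e ∩ H)).toReal) atTop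
      (nhds (volume (pBody p S T ∩ H)).toReal) := by
    rw [pBody_eq_iUnion, iUnion_inter] at hfin ⊢
    exact (ENNReal.tendsto_toReal hfin).comp (tendsto_measure_iUnion_atTop
      fun e e' h => inter_subset_inter_left H (monotone_pBodyTerm hp.ne_zero hT h))
  obtain ⟨e₀, he₀⟩ := eventually_atTop.1 (hlim.eventually (lt_mem_nhds (sub_lt_self _ hε)))
  refine ⟨e₀, fun e' he' => ⟨_, ?_, (he₀ e' he').le⟩⟩
  have hq : (0 : ℝ) < (p : ℝ) ^ e' := pow_pos (Nat.cast_pos.2 hp.pos) e'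
  rw [pBodyTerm, ← inv_smul_idealBody hq, toReal_volume_inv_smul hq]
  refine (((tendsto_ncard_div_pow_idealBody hS (hT.subset e') ((p : ℝ) ^ e' * α)).comp
    (tendsto_pow_atTop_atTop_of_one_lt hp.one_lt)).div_const _).congr fun e => ?_
  simp [pow_mul, div_div]

theorem stmt_1 {d : ℕ} (p : ℕ) (hp : p.Prime) (S : Set (Fin d → ℤ)) (a : Fin d → ℝ)
    (hS : IsStdSemigroup S a) (T : ℕ → Set (Fin d → ℤ)) (hT : IsPSystem p S T)
    (α : ℝ) (hα : 0 < α) :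
    ∀ ε : ℝ, 0 < ε → ∃ e₀ : ℕ, ∀ e' : ℕ, e₀ ≤ e' →
      ∃ L : ℝ,
        Tendsto
          (fun e : ℕ =>
            (Set.ncard {u : Fin d → ℤ |
                (∃ t ∈ T e', ∃ s ∈ S, u = ((p : ℤ) ^ e) • t + s) ∧
                  aip a u < (p : ℝ) ^ e * ((p : ℝ) ^ e' * α)} : ℝ) /
              ((p : ℝ) ^ (e * d) * (p : ℝ) ^ (e' * d)))
          atTop (nhds L) ∧
        (volume (pBody p S T ∩ {x : Fin d → ℝ | rip a x < α})).toReal - ε ≤ L :=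
  stmt_1_general p hp S a hS T hT α

end
end

section
/- Let (R, m) be a Noetherian local ring of prime characteristic p and let I_• = {I_q} be a p-family of m-primary ideals of R, indexed by powers q = p^e of p. Then there exists an integer c > 0 such that m^{cq} ⊆ I_q for all q, and moreover m^{c p^e q} ⊆ I_q^{[p^e]} for all q and all e ≥ 0. -/
open Filter IsLocalRing

noncomputable section

/-- The length `ℓ_R(M)` of an `R`-module `M`, defined as the Krull dimension of its lattice
of submodules (i.e. the supremum of lengths of chains of submodules), valued in `ℕ∞`. -/
def mlen (R M : Type*) [Semiring R] [AddCommGroup M] [Module R M] : ℕ∞ :=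
  WithBot.unbotD 0 (Order.krullDim (Submodule R M))

/-- The `q`-th Frobenius power `I^{[q]}` of an ideal `I`: the ideal generated by the
`q`-th powers of the elements of `I`. -/
def frobPow {R : Type*} [CommSemiring R] (I : Ideal R) (q : ℕ) : Ideal R :=
  Ideal.span ((fun x : R => x ^ q) '' (I : Set R))

/-!
If `m` is generated by `n` elements, then by pigeonhole every monomial of degree
`(n + 1) q` in the generators is divisible by the `q`-th power of one of them, so
`m^{(n+1)q} ⊆ m^{[q]}`. Since `(J^{[q]})^k ⊆ (J^k)^{[q]}`, an inclusion `m^k ⊆ I` gives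
`m^{(n+1)qk} ⊆ I^{[q]}`. Applied to `I_0` and combined with `I_0^{[p^e]} ⊆ I_{p^e}`
(iterating the `p`-family condition) this gives the first inclusion, and applied to `I_q` with
`q = p^{e'}` it gives the second.
-/

section FrobeniusPower

variable {R : Type*} [CommSemiring R]

lemma frobPow_mono {I J : Ideal R} (h : I ≤ J) (q : ℕ) : frobPow I q ≤ frobPow J q :=
  Ideal.span_mono (Set.image_mono h)

@[simp]
lemma frobPow_zero (I : Ideal R) : frobPow I 0 = ⊤ :=
  Ideal.eq_top_of_isUnit_mem _ (Ideal.subset_span ⟨0, I.zero_mem, pow_zero 0⟩) isUnit_one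

@[simp]
lemma frobPow_one (I : Ideal R) : frobPow I 1 = I := by
  simp [frobPow]

lemma frobPow_mul_le (I : Ideal R) (a b : ℕ) :
    frobPow I (a * b) ≤ frobPow (frobPow I a) b := by
  rw [frobPow, Ideal.span_le]
  rintro - ⟨x, hx, rfl⟩
  show x ^ (a * b) ∈ _
  rw [pow_mul]
  exact Ideal.subset_span ⟨x ^ a, Ideal.subset_span ⟨x, hx, rfl⟩, rfl⟩

lemma frobPow_mul_frobPow_le (I J : Ideal R) (q : ℕ) :
    frobPow I q * frobPow J q ≤ frobPow (I * J) q := by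
  rw [frobPow, frobPow, Ideal.span_mul_span', Ideal.span_le]
  rintro - ⟨-, ⟨x, hx, rfl⟩, -, ⟨y, hy, rfl⟩, rfl⟩
  show x ^ q * y ^ q ∈ frobPow (I * J) q
  rw [← mul_pow]
  exact Ideal.subset_span ⟨x * y, Ideal.mul_mem_mul hx hy, rfl⟩

lemma frobPow_pow_le (I : Ideal R) (q n : ℕ) : frobPow I q ^ n ≤ frobPow (I ^ n) q := by
  induction n with
  | zero =>
    rw [pow_zero, pow_zero, Ideal.one_eq_top, top_le_iff, Ideal.eq_top_iff_one]
    exact Ideal.subset_span ⟨1, Submodule.mem_top, one_pow q⟩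
  | succ n ih =>
    calc frobPow I q ^ (n + 1) = frobPow I q ^ n * frobPow I q := pow_succ _ _
      _ ≤ frobPow (I ^ n) q * frobPow I q := Ideal.mul_mono_left ih
      _ ≤ frobPow (I ^ (n + 1)) q := pow_succ I n ▸ frobPow_mul_frobPow_le _ _ _

lemma span_pow_le_span_image_pow (S : Finset R) (q : ℕ) :
    Ideal.span (S : Set R) ^ (S.card * q + 1) ≤ Ideal.span ((· ^ q) '' (S : Set R)) := by
  classical
  induction S using Finset.induction with
  | empty => simp
  | @insert x S hx ih =>
    rw [Finset.coe_insert, Ideal.span_insert, Finset.card_insert_of_notMem hx,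
      show (S.card + 1) * q + 1 = q + (S.card * q + 1) by ring]
    refine Ideal.sup_pow_add_le_pow_sup_pow.trans (sup_le ?_ (ih.trans ?_))
    · rw [Ideal.span_singleton_pow, Ideal.span_le, Set.singleton_subset_iff]
      exact Ideal.subset_span ⟨x, Set.mem_insert x _, rfl⟩
    · exact Ideal.span_mono (Set.image_mono (Set.subset_insert x _))

lemma Ideal.FG.exists_pow_mul_le_frobPow {J : Ideal R} (hJ : J.FG) :
    ∃ μ, 0 < μ ∧ ∀ q, J ^ (μ * q) ≤ frobPow J q := by
  obtain ⟨S, rfl⟩ := hJ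
  refine ⟨S.card + 1, S.card.succ_pos, fun q => ?_⟩
  rcases q.eq_zero_or_pos with rfl | hq
  · simp
  have hexp : S.card * q + 1 ≤ (S.card + 1) * q := by
    rw [add_one_mul]
    exact Nat.add_le_add_left hq _
  exact (Ideal.pow_le_pow_right hexp).trans <| (span_pow_le_span_image_pow S q).trans <|
    Ideal.span_mono (Set.image_mono Ideal.subset_span)

lemma pow_mul_le_frobPow_of_pow_le {J K : Ideal R} {μ q k : ℕ}
    (hμ : J ^ (μ * q) ≤ frobPow J q) (hk : J ^ k ≤ K) : J ^ (μ * q * k) ≤ frobPow K q :=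
  calc J ^ (μ * q * k) = (J ^ (μ * q)) ^ k := pow_mul _ _ _
    _ ≤ frobPow J q ^ k := Ideal.pow_right_mono hμ k
    _ ≤ frobPow (J ^ k) q := frobPow_pow_le _ _ _
    _ ≤ frobPow K q := frobPow_mono hk q

/-- `I e` stands for the paper's `I_{p^e}`. -/
def IsPFamily (p : ℕ) (I : ℕ → Ideal R) : Prop :=
  ∀ e, frobPow (I e) p ≤ I (e + 1)

lemma IsPFamily.frobPow_pow_le {p : ℕ} {I : ℕ → Ideal R} (hI : IsPFamily p I) (e n : ℕ) :
    frobPow (I e) (p ^ n) ≤ I (e + n) := by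
  induction n with
  | zero => simp
  | succ n ih =>
    calc frobPow (I e) (p ^ (n + 1)) ≤ frobPow (frobPow (I e) (p ^ n)) p :=
          pow_succ p n ▸ frobPow_mul_le _ _ _
      _ ≤ frobPow (I (e + n)) p := frobPow_mono ih p
      _ ≤ I (e + n + 1) := hI _

end FrobeniusPower

theorem stmt_6_general (R : Type*) [CommRing R] [IsNoetherianRing R] [IsLocalRing R]
    (p : ℕ) (I : ℕ → Ideal R)
    (hprim : ∀ e : ℕ, (I e).radical = maximalIdeal R)
    (hfam : ∀ e : ℕ, frobPow (I e) p ≤ I (e + 1)) :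
    ∃ c : ℕ, 0 < c ∧ (∀ e : ℕ, maximalIdeal R ^ (c * p ^ e) ≤ I e) ∧
      ∀ e e' : ℕ, maximalIdeal R ^ (c * p ^ e' * p ^ e) ≤ frobPow (I e) (p ^ e') := by
  have hfg : (maximalIdeal R).FG := IsNoetherian.noetherian _
  obtain ⟨μ, hμ_pos, hμ⟩ := hfg.exists_pow_mul_le_frobPow
  obtain ⟨k, hk⟩ := Ideal.exists_pow_le_of_le_radical_of_fg (hprim 0).ge hfg
  have hk' : maximalIdeal R ^ (k + 1) ≤ I 0 := (Ideal.pow_le_pow_right k.le_succ).trans hk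
  have hpow_le (e : ℕ) : maximalIdeal R ^ (μ * p ^ e * (k + 1)) ≤ I e := by
    simpa using (pow_mul_le_frobPow_of_pow_le (hμ _) hk').trans
      (IsPFamily.frobPow_pow_le hfam 0 e)
  refine ⟨μ * μ * (k + 1), by positivity, fun e => ?_, fun e e' => ?_⟩
  · refine (Ideal.pow_le_pow_right ?_).trans (hpow_le e)
    calc μ * p ^ e * (k + 1) = 1 * μ * (k + 1) * p ^ e := by ring
      _ ≤ μ * μ * (k + 1) * p ^ e := by gcongr; exact hμ_pos
  · refine (Ideal.pow_le_pow_right (le_of_eq ?_)).trans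
      (pow_mul_le_frobPow_of_pow_le (hμ _) (hpow_le e))
    ring

theorem stmt_6 (R : Type*) [CommRing R] [IsNoetherianRing R] [IsLocalRing R]
    (p : ℕ) (hp : p.Prime) [CharP R p] (I : ℕ → Ideal R)
    (hprim : ∀ e : ℕ, (I e).radical = maximalIdeal R)
    (hfam : ∀ e : ℕ, frobPow (I e) p ≤ I (e + 1)) :
    ∃ c : ℕ, 0 < c ∧ (∀ e : ℕ, maximalIdeal R ^ (c * p ^ e) ≤ I e) ∧
      ∀ e e' : ℕ, maximalIdeal R ^ (c * p ^ e' * p ^ e) ≤ frobPow (I e) (p ^ e') :=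
  stmt_6_general R p I hprim hfam

end
end

section
/- Let (R, m) be a Noetherian local ring of prime characteristic p, let I be an m-primary ideal, and let M be a finitely generated R-module. Then there exists a constant α > 0 such that ℓ_R(M/I^{[p^e]}M) ≤ α · p^{e·dim M} for all e ≥ 0, where dim M denotes the Krull dimension of R/ann(M). -/
/-!
Statement 7 (Lemma 4.11): for a Noetherian local ring `(R,m)` of prime characteristic `p`, an
`m`-primary ideal `I`, and a finitely generated `R`-module `M`, there is a constant `α > 0`
with `ℓ_R(M/I^{[p^e]}M) ≤ α · p^{e·dim M}` for all `e ≥ 0`, where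
`dim M = Krull dim of R/ann(M)`.
-/

open Filter IsLocalRing

noncomputable section

/-!
Choose a system of parameters for `M`: elements `y₁, …, y_s ∈ m` with `s ≤ dim M` such that
`ann M + (y)` is `m`-primary, so that `L = ℓ(M/(y)M)` is finite. Multiplication by `x^i` maps
`M/xM` onto `x^i M/x^{i+1} M`, so `ℓ(M/x^n M) ≤ n ℓ(M/xM)`; applied to one parameter at a time
this gives `ℓ(M/(y^n)M) ≤ n^s L`. If `m^k ⊆ I` then `(y^{kq}) ⊆ I^{[q]}`, hence
`ℓ(M/I^{[q]}M) ≤ (kq)^s L ≤ k^{dim M} L · q^{dim M}`.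
-/

theorem mlen_eq_length (R M : Type*) [Ring R] [AddCommGroup M] [Module R M] :
    mlen R M = Module.length R M := by
  rw [mlen, ← Module.coe_length]
  rfl

namespace Module

section Ring

variable {R M : Type*} [Ring R] [AddCommGroup M] [Module R M]

theorem length_range_le_length_quotient {N : Type*} [AddCommGroup N] [Module R N]
    (f : M →ₗ[R] N) {P : Submodule R M} (hP : P ≤ LinearMap.ker f) :
    length R (LinearMap.range f) ≤ length R (M ⧸ P) := by
  refine length_le_of_surjective
    (P.liftQ f.rangeRestrict (by rwa [LinearMap.ker_rangeRestrict])) ?_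
  rw [← LinearMap.range_eq_top, Submodule.range_liftQ, LinearMap.range_rangeRestrict]

theorem length_quotient_le_of_le {P Q : Submodule R M} (h : P ≤ Q) :
    length R (M ⧸ Q) ≤ length R (M ⧸ P) :=
  length_le_of_surjective _ (Submodule.factor_surjective h)

theorem length_quotient_eq_add {P Q : Submodule R M} (h : P ≤ Q) :
    length R (M ⧸ P) = length R (Submodule.map P.mkQ Q) + length R (M ⧸ Q) := by
  rw [length_eq_add_of_exact _ _ (Submodule.injective_subtype _) (Submodule.mkQ_surjective _)
    (LinearMap.exact_subtype_mkQ (Submodule.map P.mkQ Q)),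
    (Submodule.quotientQuotientEquivQuotient P Q h).length_eq]

end Ring

section CommRing

variable {R M : Type*} [CommRing R] [AddCommGroup M] [Module R M]

theorem length_quotient_span_pow_smul_le_mul (x : R) (n : ℕ) :
    length R (M ⧸ Ideal.span {x ^ n} • (⊤ : Submodule R M)) ≤
      n * length R (M ⧸ Ideal.span {x} • (⊤ : Submodule R M)) := by
  induction n with
  | zero =>
    have : Subsingleton (M ⧸ Ideal.span {x ^ 0} • (⊤ : Submodule R M)) := by
      rw [pow_zero, Ideal.span_singleton_one, Submodule.top_smul]
      infer_instance
    simp [length_eq_zero]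
  | succ n ih =>
    set A := Ideal.span {x ^ (n + 1)} • (⊤ : Submodule R M) with hA
    set B := Ideal.span {x ^ n} • (⊤ : Submodule R M) with hB
    have hAB : A ≤ B :=
      Submodule.smul_mono_left (Ideal.span_singleton_le_span_singleton.2 ⟨x, pow_succ x n⟩)
    set g := A.mkQ ∘ₗ DistribSMul.toLinearMap R M (x ^ n)
    have hrange : Submodule.map A.mkQ B = LinearMap.range g := by
      rw [hB, Submodule.ideal_span_singleton_smul, LinearMap.range_comp, LinearMap.range_eq_map,
        ← Submodule.pointwise_smul_def]
    have hker : Ideal.span {x} • (⊤ : Submodule R M) ≤ LinearMap.ker g := by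
      intro y hy
      rw [Submodule.ideal_span_singleton_smul] at hy
      obtain ⟨m, -, rfl⟩ := (Submodule.mem_smul_pointwise_iff_exists _ _ _).1 hy
      simp only [LinearMap.mem_ker, g, LinearMap.coe_comp, Function.comp_apply,
        DistribSMul.toLinearMap_apply, Submodule.mkQ_apply, Submodule.Quotient.mk_eq_zero]
      rw [hA, Submodule.ideal_span_singleton_smul, smul_smul, ← pow_succ]
      exact Submodule.smul_mem_pointwise_smul _ _ _ trivial
    calc length R (M ⧸ A)
        = length R (Submodule.map A.mkQ B) + length R (M ⧸ B) := length_quotient_eq_add hAB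
      _ ≤ length R (M ⧸ Ideal.span {x} • (⊤ : Submodule R M)) +
            n * length R (M ⧸ Ideal.span {x} • (⊤ : Submodule R M)) :=
          add_le_add (hrange ▸ length_range_le_length_quotient g hker) ih
      _ = (n + 1 : ℕ) * length R (M ⧸ Ideal.span {x} • (⊤ : Submodule R M)) := by
          push_cast
          ring

theorem length_quotient_sup_smul (I J : Ideal R) :
    length R (M ⧸ (I ⊔ J) • (⊤ : Submodule R M)) =
      length R ((M ⧸ I • (⊤ : Submodule R M)) ⧸
        J • (⊤ : Submodule R (M ⧸ I • (⊤ : Submodule R M)))) := by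
  have h : J • (⊤ : Submodule R (M ⧸ I • (⊤ : Submodule R M))) =
      Submodule.map (I • ⊤ : Submodule R M).mkQ (J • ⊤) := by
    rw [Submodule.map_smul'', Submodule.map_top, Submodule.range_mkQ]
  rw [h, Submodule.sup_smul, (Submodule.quotientQuotientEquivQuotientSup _ _).length_eq]

theorem length_quotient_span_pow_smul_le (s : Finset R) (n : ℕ) :
    length R (M ⧸ Ideal.span ((· ^ n) '' (s : Set R)) • (⊤ : Submodule R M)) ≤
      n ^ s.card * length R (M ⧸ Ideal.span (s : Set R) • (⊤ : Submodule R M)) := by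
  classical
  induction s using Finset.induction_on generalizing M with
  | empty =>
    rw [Finset.coe_empty, Set.image_empty]
    simp
  | insert a s ha ih =>
    rw [Finset.coe_insert, Set.image_insert_eq, Ideal.span_insert, Ideal.span_insert,
      Finset.card_insert_of_notMem ha]
    calc _ = length R ((M ⧸ Ideal.span {a ^ n} • (⊤ : Submodule R M)) ⧸
            Ideal.span ((· ^ n) '' (s : Set R)) • (⊤ : Submodule R (M ⧸ _))) :=
          length_quotient_sup_smul _ _
      _ ≤ n ^ s.card * length R ((M ⧸ Ideal.span {a ^ n} • (⊤ : Submodule R M)) ⧸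
            Ideal.span (s : Set R) • (⊤ : Submodule R (M ⧸ _))) := ih
      _ = n ^ s.card * length R ((M ⧸ Ideal.span (s : Set R) • (⊤ : Submodule R M)) ⧸
            Ideal.span {a ^ n} • (⊤ : Submodule R (M ⧸ _))) := by
          rw [← length_quotient_sup_smul, sup_comm, length_quotient_sup_smul]
      _ ≤ n ^ s.card * (n * length R ((M ⧸ Ideal.span (s : Set R) • (⊤ : Submodule R M)) ⧸
            Ideal.span {a} • (⊤ : Submodule R (M ⧸ _)))) := by
          gcongr
          exact length_quotient_span_pow_smul_le_mul a n
      _ = _ := by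
          rw [← length_quotient_sup_smul, sup_comm, pow_succ, mul_assoc]

end CommRing

end Module

theorem span_image_pow_mul_le_frobPow {R : Type*} [CommSemiring R] {I : Ideal R} {s : Set R}
    {k : ℕ} (hs : ∀ x ∈ s, x ^ k ∈ I) (q : ℕ) :
    Ideal.span ((· ^ (k * q)) '' s) ≤ frobPow I q := by
  rw [Ideal.span_le]
  rintro _ ⟨x, hx, rfl⟩
  exact Ideal.subset_span ⟨x ^ k, hs x hx, (pow_mul x k q).symm⟩

namespace IsLocalRing

theorem radical_eq_maximalIdeal_of_mem_minimalPrimes {R : Type*} [CommRing R] [IsLocalRing R]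
    {J : Ideal R} (h : maximalIdeal R ∈ J.minimalPrimes) : J.radical = maximalIdeal R := by
  have : J.minimalPrimes = {maximalIdeal R} := Set.eq_singleton_iff_unique_mem.2
    ⟨h, fun P hP => le_antisymm (le_maximalIdeal hP.1.1.ne_top)
      (h.2 hP.1 (le_maximalIdeal hP.1.1.ne_top))⟩
  rw [← Ideal.sInf_minimalPrimes, this, sInf_singleton]

variable {R : Type*} [CommRing R] [IsNoetherianRing R] [IsLocalRing R]

theorem exists_finset_card_le_radical_sup_span_eq {J : Ideal R} (hJ : J ≠ ⊤) {d : ℕ}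
    (hd : ringKrullDim (R ⧸ J) ≤ d) :
    ∃ s : Finset R, s.card ≤ d ∧ (J ⊔ Ideal.span s).radical = maximalIdeal R := by
  classical
  have : Nontrivial (R ⧸ J) := Ideal.Quotient.nontrivial_iff.2 hJ
  have : IsLocalRing (R ⧸ J) := .of_surjective' _ Ideal.Quotient.mk_surjective
  obtain ⟨t, ht, hcard⟩ :=
    (maximalIdeal (R ⧸ J)).exists_finset_card_eq_height_of_isNoetherianRing
  have htd : t.card ≤ d := by
    have := maximalIdeal_height_eq_ringKrullDim (R := R ⧸ J)
    rw [← hcard] at this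
    exact_mod_cast this.trans_le hd
  let lift := Function.surjInv (Ideal.Quotient.mk_surjective (I := J))
  refine ⟨t.image lift, Finset.card_image_le.trans htd, ?_⟩
  have hmap : Ideal.map (Ideal.Quotient.mk J) (Ideal.span (t.image lift)) = Ideal.span t := by
    rw [Ideal.map_span, Finset.coe_image, Set.image_image]
    simp [lift, Function.surjInv_eq]
  have hcomap : Ideal.comap (Ideal.Quotient.mk J) (Ideal.span t) =
      J ⊔ Ideal.span (t.image lift) := by
    rw [← hmap, Ideal.comap_map_of_surjective' _ Ideal.Quotient.mk_surjective, Ideal.mk_ker,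
      sup_comm]
  rw [← hcomap, ← Ideal.comap_radical, radical_eq_maximalIdeal_of_mem_minimalPrimes ht]
  exact eq_maximalIdeal (Ideal.comap_isMaximal_of_surjective _ Ideal.Quotient.mk_surjective)

variable {M : Type*} [AddCommGroup M] [Module R M] [Module.Finite R M]

theorem length_quotient_smul_ne_top {K : Ideal R} (hK : K.radical = maximalIdeal R) :
    Module.length R (M ⧸ K • (⊤ : Submodule R M)) ≠ ⊤ := by
  have : IsArtinianRing (R ⧸ K) := quotient_artinian_of_mem_minimalPrimes_of_isLocalRing K (by
    rw [← Ideal.radical_minimalPrimes, hK, Ideal.minimalPrimes_eq_subsingleton_self]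
    rfl)
  have : Module.Finite (R ⧸ K) (M ⧸ K • (⊤ : Submodule R M)) :=
    Module.Finite.of_restrictScalars_finite R _ _
  rw [Module.length_eq_of_surjective (R := R ⧸ K) Ideal.Quotient.mk_surjective]
  exact Module.length_ne_top

theorem exists_length_quotient_frobPow_smul_le {I : Ideal R} (hI : I.radical = maximalIdeal R)
    {d : ℕ} (hd : ringKrullDim (R ⧸ Module.annihilator R M) ≤ d) :
    ∃ C : ℕ, ∀ q : ℕ, 0 < q →
      Module.length R (M ⧸ frobPow I q • (⊤ : Submodule R M)) ≤ (C * q ^ d : ℕ) := by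
  rcases subsingleton_or_nontrivial M with hM | hM
  · exact ⟨0, fun q _ => by simp [Module.length_eq_zero]⟩
  obtain ⟨s, hsd, hs⟩ := exists_finset_card_le_radical_sup_span_eq
    (mt Module.annihilator_eq_top_iff.1 (not_subsingleton M)) hd
  obtain ⟨L, hL⟩ : ∃ L : ℕ,
      L = Module.length R (M ⧸ Ideal.span (s : Set R) • (⊤ : Submodule R M)) := by
    have := length_quotient_smul_ne_top (M := M) hs
    rwa [Submodule.sup_smul, ← Submodule.annihilator_top, Submodule.annihilator_smul,
      bot_sup_eq, ENat.ne_top_iff_exists] at this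
  obtain ⟨k, hk⟩ := Ideal.exists_pow_le_of_le_radical_of_fg hI.ge (IsNoetherian.noetherian _)
  have hsI : ∀ x ∈ (s : Set R), x ^ (k + 1) ∈ I := fun x hx => by
    have hxm : x ∈ maximalIdeal R :=
      hs ▸ Ideal.le_radical (Ideal.mem_sup_right (Ideal.subset_span hx))
    rw [pow_succ]
    exact I.mul_mem_right _ (hk (Ideal.pow_mem_pow hxm k))
  refine ⟨(k + 1) ^ d * L, fun q hq => ?_⟩
  calc Module.length R (M ⧸ frobPow I q • (⊤ : Submodule R M))
      ≤ Module.length R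
          (M ⧸ Ideal.span ((· ^ ((k + 1) * q)) '' (s : Set R)) • (⊤ : Submodule R M)) :=
        Module.length_quotient_le_of_le
          (Submodule.smul_mono_left (span_image_pow_mul_le_frobPow hsI q))
    _ ≤ ((k + 1) * q : ℕ) ^ s.card * L := hL ▸ Module.length_quotient_span_pow_smul_le _ _
    _ ≤ ((k + 1) * q : ℕ) ^ d * L := by
        gcongr
        exact_mod_cast Nat.one_le_iff_ne_zero.2 (by positivity)
    _ = ((k + 1) ^ d * L * q ^ d : ℕ) := by
        rw [← Nat.cast_pow, ← Nat.cast_mul, mul_pow, mul_right_comm]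

end IsLocalRing

theorem stmt_7_general (R : Type*) [CommRing R] [IsNoetherianRing R] [IsLocalRing R]
    (p : ℕ) (hp : p.Prime) (I : Ideal R) (hprim : I.radical = maximalIdeal R)
    (M : Type*) [AddCommGroup M] [Module R M] [Module.Finite R M]
    (dM : ℕ) (hdM : ringKrullDim (R ⧸ Module.annihilator R M) = dM) :
    ∃ α : ℝ, 0 < α ∧ ∀ e : ℕ, ∃ n : ℕ,
      mlen R (M ⧸ (frobPow I (p ^ e) • (⊤ : Submodule R M))) = n ∧
      (n : ℝ) ≤ α * (p : ℝ) ^ (e * dM) := by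
  obtain ⟨C, hC⟩ := exists_length_quotient_frobPow_smul_le (M := M) hprim hdM.le
  refine ⟨C + 1, by positivity, fun e => ?_⟩
  have hbound := hC (p ^ e) (pow_pos hp.pos e)
  obtain ⟨n, hn⟩ :=
    ENat.ne_top_iff_exists.1 (ne_top_of_le_ne_top (ENat.natCast_ne_top _) hbound)
  refine ⟨n, by rw [mlen_eq_length, hn], ?_⟩
  rw [← hn, ← pow_mul] at hbound
  have hn_le : n ≤ C * p ^ (e * dM) := by exact_mod_cast hbound
  calc (n : ℝ) ≤ C * (p : ℝ) ^ (e * dM) := by exact_mod_cast hn_le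
    _ ≤ (C + 1) * (p : ℝ) ^ (e * dM) := by gcongr; linarith

theorem stmt_7 (R : Type*) [CommRing R] [IsNoetherianRing R] [IsLocalRing R]
    (p : ℕ) (hp : p.Prime) [CharP R p] (I : Ideal R) (hprim : I.radical = maximalIdeal R)
    (M : Type*) [AddCommGroup M] [Module R M] [Module.Finite R M]
    (dM : ℕ) (hdM : ringKrullDim (R ⧸ Module.annihilator R M) = dM) :
    ∃ α : ℝ, 0 < α ∧ ∀ e : ℕ, ∃ n : ℕ,
      mlen R (M ⧸ (frobPow I (p ^ e) • (⊤ : Submodule R M))) = n ∧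
      (n : ℝ) ≤ α * (p : ℝ) ^ (e * dM) :=
  stmt_7_general R p hp I hprim M dM hdM

end
end

section
/- Let R be a reduced Noetherian ring of prime characteristic p and let I be an ideal of R. For each q = p^e define J_q = {x ∈ R : φ(x) ∈ I for every additive map φ : R → R satisfying φ(r^{p^e}·y) = r·φ(y) for all r, y ∈ R}. Then each J_q is an ideal of R and J_• = {J_q} is a p-family, i.e., J_q^{[p]} ⊆ J_{pq} for all q. -/
/-!
Statement 15 (Example 4.5): for a reduced Noetherian ring `R` of prime characteristic `p`,
an ideal `I`, and `J_q = {x ∈ R : φ(x) ∈ I for every additive φ : R → R with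
φ(r^{p^e}y) = r·φ(y)}` (`q = p^e`), each `J_q` is an ideal and `J_•` is a `p`-family:
`J_q^{[p]} ⊆ J_{pq}`.
-/

open Filter IsLocalRing

noncomputable section

/-! Precomposing a `q⁻¹`-linear map with multiplication by `c` keeps it `q⁻¹`-linear, so the test
set `J_q` is an ideal; precomposing a `(qp)⁻¹`-linear map with the Frobenius `x ↦ x ^ p` gives a
`q⁻¹`-linear map, so `x ∈ J_q` forces `x ^ p ∈ J_{qp}`. -/

namespace AddMonoidHom

variable {R : Type*} [CommSemiring R]

/-- `q⁻¹`-linear maps; for `q = p ^ e` these are the elements of `Hom_R(F^e_* R, R)`. -/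
def IsPowSemilinear (q : ℕ) (φ : R →+ R) : Prop :=
  ∀ r y : R, φ (r ^ q * y) = r * φ y

theorem IsPowSemilinear.comp_mulLeft {q : ℕ} {φ : R →+ R} (hφ : φ.IsPowSemilinear q) (c : R) :
    (φ.comp (mulLeft c)).IsPowSemilinear q := fun r y => by
  simp only [comp_apply, coe_mulLeft]
  rw [mul_left_comm, hφ]

theorem IsPowSemilinear.comp_frobenius {p q : ℕ} [ExpChar R p] {φ : R →+ R}
    (hφ : φ.IsPowSemilinear (q * p)) :
    (φ.comp (frobenius R p).toAddMonoidHom).IsPowSemilinear q := fun r y => by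
  simp only [comp_apply, RingHom.toAddMonoidHom_eq_coe, coe_coe, frobenius_def]
  rw [mul_pow, ← pow_mul, hφ]

end AddMonoidHom

section

variable {R : Type*} [CommSemiring R]

/-- The ideal `J_q` of the statement. -/
def frobeniusTestIdeal (I : Ideal R) (q : ℕ) : Ideal R where
  carrier := {x | ∀ φ : R →+ R, φ.IsPowSemilinear q → φ x ∈ I}
  add_mem' ha hb φ hφ := by rw [map_add]; exact I.add_mem (ha φ hφ) (hb φ hφ)
  zero_mem' _ _ := by rw [map_zero]; exact I.zero_mem
  smul_mem' c _ hx φ hφ := hx _ (hφ.comp_mulLeft c)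

theorem pow_mem_frobeniusTestIdeal {I : Ideal R} {p q : ℕ} [ExpChar R p] {x : R}
    (hx : x ∈ frobeniusTestIdeal I q) : x ^ p ∈ frobeniusTestIdeal I (q * p) :=
  fun _ hφ => hx _ hφ.comp_frobenius

theorem frobPow_frobeniusTestIdeal_le (I : Ideal R) (p q : ℕ) [ExpChar R p] :
    frobPow (frobeniusTestIdeal I q) p ≤ frobeniusTestIdeal I (q * p) := by
  rw [frobPow, Ideal.span_le]
  rintro _ ⟨x, hx, rfl⟩
  exact pow_mem_frobeniusTestIdeal hx

end

theorem stmt_15_general (R : Type*) [CommRing R] (p : ℕ) (hp : p.Prime) [CharP R p] (I : Ideal R) :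
    (∀ e : ℕ, ∃ J : Ideal R,
      (J : Set R) =
        {x : R | ∀ φ : R →+ R, (∀ r y : R, φ (r ^ p ^ e * y) = r * φ y) → φ x ∈ I}) ∧
    (∀ e : ℕ, ∀ J J' : Ideal R,
      (J : Set R) =
          {x : R | ∀ φ : R →+ R, (∀ r y : R, φ (r ^ p ^ e * y) = r * φ y) → φ x ∈ I} →
      (J' : Set R) =
          {x : R | ∀ φ : R →+ R, (∀ r y : R, φ (r ^ p ^ (e + 1) * y) = r * φ y) → φ x ∈ I} →
      frobPow J p ≤ J') := by
  have : Fact p.Prime := ⟨hp⟩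
  refine ⟨fun e => ⟨frobeniusTestIdeal I (p ^ e), rfl⟩, fun e J J' hJ hJ' => ?_⟩
  obtain rfl : J = frobeniusTestIdeal I (p ^ e) := SetLike.coe_injective hJ
  obtain rfl : J' = frobeniusTestIdeal I (p ^ e * p) := SetLike.coe_injective hJ'
  exact frobPow_frobeniusTestIdeal_le I p (p ^ e)

theorem stmt_15 (R : Type*) [CommRing R] [IsNoetherianRing R] [IsReduced R]
    (p : ℕ) (hp : p.Prime) [CharP R p] (I : Ideal R) :
    (∀ e : ℕ, ∃ J : Ideal R,
      (J : Set R) =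
        {x : R | ∀ φ : R →+ R, (∀ r y : R, φ (r ^ p ^ e * y) = r * φ y) → φ x ∈ I}) ∧
    (∀ e : ℕ, ∀ J J' : Ideal R,
      (J : Set R) =
          {x : R | ∀ φ : R →+ R, (∀ r y : R, φ (r ^ p ^ e * y) = r * φ y) → φ x ∈ I} →
      (J' : Set R) =
          {x : R | ∀ φ : R →+ R, (∀ r y : R, φ (r ^ p ^ (e + 1) * y) = r * φ y) → φ x ∈ I} →
      frobPow J p ≤ J') :=
  stmt_15_general R p hp I

end
end
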